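/- arXiv:math/0309325 — 2 statements merged into one kernel-verified Lean document; each statement's English description precedes it below -/
import Mathlib

section
/- For every i in Z/3, every word w in the set B_{i+1} satisfies (a_i b_i) w ~ w (a_i b_i) in SK, and every word w in the set B_{i-1} satisfies (a_i d_i) w ~ w (a_i d_i) in SK. -/
/-- The 15-letter alphabet A = {a_i, b_i, c_i, d_i, x_i : i ∈ ℤ/3}. -/
inductive Letter : Type
  | a : ZMod 3 → Letter
  | b : ZMod 3 → Letter
  | c : ZMod 3 → Letter
  | d : ZMod 3 → Letter
  | x : ZMod 3 → Letter
  deriving DecidableEq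

/-- Words: the free monoid on the alphabet A. -/
abbrev Word := FreeMonoid Letter

def a (i : ZMod 3) : Word := FreeMonoid.of (Letter.a i)
def b (i : ZMod 3) : Word := FreeMonoid.of (Letter.b i)
def c (i : ZMod 3) : Word := FreeMonoid.of (Letter.c i)
def d (i : ZMod 3) : Word := FreeMonoid.of (Letter.d i)
def x (i : ZMod 3) : Word := FreeMonoid.of (Letter.x i)

/-- t_i = b_{i+1} d_{i-1} d_{i+1} b_{i-1}. -/
def t (i : ZMod 3) : Word := b (i+1) * d (i-1) * d (i+1) * b (i-1)

/-- t'_i = d_{i-1} b_{i+1} b_{i-1} d_{i+1}. -/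
def t' (i : ZMod 3) : Word := d (i-1) * b (i+1) * b (i-1) * d (i+1)

/-- The defining relations (1)-(10) of the semigroup SK. -/
inductive SKRel : Word → Word → Prop
  | r1a (i : ZMod 3) : SKRel (a i) (a (i+1) * d (i-1))
  | r1b (i : ZMod 3) : SKRel (b i) (a (i-1) * c (i+1))
  | r1c (i : ZMod 3) : SKRel (c i) (b (i-1) * c (i+1))
  | r1d (i : ZMod 3) : SKRel (d i) (a (i+1) * c (i-1))
  | r2 (i : ZMod 3) : SKRel (x i) (d (i+1) * x (i-1) * b (i+1))
  | r3 : SKRel (d 0 * d 1 * d 2) 1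
  | r4bd (i : ZMod 3) : SKRel (b i * d i) 1
  | r4db (i : ZMod 3) : SKRel (d i * b i) 1
  | r5d (i : ZMod 3) : SKRel (d i * x i * d i) (a i * (d i * x i * d i) * c i)
  | r5b (i : ZMod 3) : SKRel (b i * x i * b i) (a i * (b i * x i * b i) * c i)
  | r6 (i : ZMod 3) :
      SKRel (x i * (d (i+1) * d i * d (i-1))) ((d (i+1) * d i * d (i-1)) * x i)
  | r7 (i : ZMod 3) (w : Word)
      (hw : w ∈ ({c (i+1), x (i+1), b i * d (i+1) * d i} : Set Word)) :
      SKRel ((d i * c i) * w) (w * (d i * c i))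
  | r8 (i : ZMod 3) (w : Word)
      (hw : w ∈ ({a (i+1), b (i+1), c (i+1), x (i+1), b i * d (i+1) * d i} : Set Word)) :
      SKRel ((a i * b i) * w) (w * (a i * b i))
  | r9 (i : ZMod 3) (w : Word)
      (hw : w ∈ ({a i, b i, c i, x i, b (i-1) * d i * d (i-1)} : Set Word)) :
      SKRel (t i * w) (w * t i)
  | r10 (i : ZMod 3) (w : Word)
      (hw : w ∈ ({a (i+1), b (i+1), c (i+1), x (i+1), b i * d (i+1) * d i} : Set Word)) :
      SKRel ((d i * x i * b i) * w) (w * (d i * x i * b i))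

/-- The congruence generated by relations (1)-(10); `skCon u v` means u ~ v,
i.e. u and v have equal images in the presented monoid SK. -/
def skCon : Con Word := conGen SKRel

/-- B_j = {a_j, b_j, c_j, d_j, b_{j-1} b_j d_{j-1}, b_{j-1} d_j d_{j-1}}. -/
def Bset (j : ZMod 3) : Set Word :=
  {a j, b j, c j, d j, b (j-1) * b j * d (j-1), b (j-1) * d j * d (j-1)}

/-!
In `SK` every `d i` is a unit with inverse `b i`, and (3) gives `d (i-1) d i d (i+1) = 1` for
every `i`, so `b (i+1) = d (i-1) d i`; with (1) this yields `a i d i = a (i+1) d (i-1) d i =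
a (i+1) b (i+1)`, which reduces (36) at `i` to (35) at `i + 1` because `i + 2 = i - 1`.
For (35), relation (8) covers four of the six words of `B (i+1)`; the other two, `d (i+1)` and
`b i b (i+1) d i`, are the inverses of `b (i+1)` and `b i d (i+1) d i`, and whatever commutes
with a unit commutes with its inverse.
-/

abbrev SK : Type := skCon.Quotient

theorem SKRel.coe_eq {u v : Word} (h : SKRel u v) : (u : SK) = v :=
  skCon.eq.mpr (ConGen.Rel.of u v h)

theorem skCon_mul_comm_of_commute {u w : Word} (h : Commute (u : SK) w) :
    skCon (u * w) (w * u) :=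
  skCon.eq.mp h

theorem mul_eq_one_rotate {G : Type*} [Group G] {x y z : G} (h : x * y * z = 1) :
    z * x * y = 1 := by
  rw [mul_assoc]
  exact mul_eq_one_comm.mp h

def dUnit (i : ZMod 3) : SKˣ where
  val := d i
  inv := b i
  val_inv := (SKRel.r4db i).coe_eq
  inv_val := (SKRel.r4bd i).coe_eq

@[simp] theorem coe_dUnit (i : ZMod 3) : (dUnit i : SK) = d i := rfl

@[simp] theorem coe_dUnit_inv (i : ZMod 3) : ((dUnit i)⁻¹ : SKˣ) = (b i : SK) := rfl

theorem dUnit_pred_mul_mul_succ (i : ZMod 3) : dUnit (i - 1) * dUnit i * dUnit (i + 1) = 1 := by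
  have h : dUnit 0 * dUnit 1 * dUnit 2 = 1 := Units.ext SKRel.r3.coe_eq
  fin_cases i
  · exact mul_eq_one_rotate h
  · exact h
  · exact mul_eq_one_rotate (mul_eq_one_rotate h)

theorem coe_b_succ (i : ZMod 3) : (b (i + 1) : SK) = d (i - 1) * d i := by
  rw [← coe_dUnit_inv, ← mul_eq_one_iff_eq_inv.mp (dUnit_pred_mul_mul_succ i)]
  rfl

theorem coe_a_mul_d (i : ZMod 3) : ((a i * d i : Word) : SK) = (a (i + 1) * b (i + 1) : Word) := by
  rw [Con.coe_mul, Con.coe_mul, coe_b_succ, (SKRel.r1a i).coe_eq, Con.coe_mul, mul_assoc]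

theorem commute_a_mul_b_of_r8 {i : ZMod 3} {w : Word}
    (hw : w ∈ ({a (i+1), b (i+1), c (i+1), x (i+1), b i * d (i+1) * d i} : Set Word)) :
    Commute ((a i * b i : Word) : SK) w :=
  (SKRel.r8 i w hw).coe_eq

theorem commute_a_mul_b_of_mem_Bset {i : ZMod 3} {w : Word} (hw : w ∈ Bset (i + 1)) :
    Commute ((a i * b i : Word) : SK) w := by
  have hb : Commute ((a i * b i : Word) : SK) ((dUnit (i + 1))⁻¹ : SKˣ) :=
    commute_a_mul_b_of_r8 (by simp)
  have hbdd : Commute ((a i * b i : Word) : SK) ((dUnit i)⁻¹ * dUnit (i + 1) * dUnit i : SKˣ) :=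
    commute_a_mul_b_of_r8 (w := b i * d (i + 1) * d i) (by simp)
  simp only [Bset, add_sub_cancel_right, Set.mem_insert_iff, Set.mem_singleton_iff] at hw
  rcases hw with rfl | rfl | rfl | rfl | rfl | rfl
  · exact commute_a_mul_b_of_r8 (by simp)
  · exact hb
  · exact commute_a_mul_b_of_r8 (by simp)
  · exact hb.units_inv_right
  · simpa [mul_assoc] using hbdd.units_inv_right
  · exact hbdd

/-- (35)-(36): (a_i b_i) w ~ w (a_i b_i) for w ∈ B_{i+1} and
(a_i d_i) w ~ w (a_i d_i) for w ∈ B_{i-1}. -/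
theorem equiv_35_36 : ∀ i : ZMod 3,
    (∀ w ∈ Bset (i+1), skCon (a i * b i * w) (w * (a i * b i))) ∧
    (∀ w ∈ Bset (i-1), skCon (a i * d i * w) (w * (a i * d i))) := by
  intro i
  have hi : i - 1 = i + 1 + 1 := by rw [sub_eq_add_neg, add_assoc]; rfl
  refine ⟨fun w hw => skCon_mul_comm_of_commute (commute_a_mul_b_of_mem_Bset hw), ?_⟩
  intro w hw
  rw [hi] at hw
  apply skCon_mul_comm_of_commute
  rw [coe_a_mul_d]
  exact commute_a_mul_b_of_mem_Bset hw
end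

section
/- For every i in Z/3 the following equivalence holds in SK: b_{i-1}^2 x_i d_{i-1}^2 ~ (b_{i-1}^2 b_i d_{i-1}^2) (b_{i-1} d_i d_{i-1}) d_i^2 x_i b_i^2 (b_{i-1} b_i d_{i-1}) (b_{i-1}^2 d_i d_{i-1}^2). -/
lemma q_of {u v : Word} (h : SKRel u v) : (u : skCon.Quotient) = v :=
  skCon.eq.mpr (ConGen.Rel.of u v h)

/-- The purely equational computation, carried out in an abstract monoid. -/
lemma main_monoid {M : Type*} [Monoid M] (Bi Di Bj Dj B1 D1 Xi : M)
    (hbdi : Bi * Di = 1)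
    (hbdj : Bj * Dj = 1) (hdbj : Dj * Bj = 1)
    (hbd1 : B1 * D1 = 1) (hdb1 : D1 * B1 = 1)
    (hdd : Dj = B1 * Bi)
    (hu : Di * Xi * Bi * B1 = B1 * (Di * Xi * Bi)) :
    Bj^2 * Xi * Dj^2 =
      (Bj^2 * Bi * Dj^2) * (Bj * Di * Dj) * Di^2 * Xi * Bi^2 * (Bj * Bi * Dj) *
        (Bj^2 * Di * Dj^2) := by
  have hBiDi : ∀ z : M, Bi * (Di * z) = z := fun z => by rw [← mul_assoc, hbdi, one_mul]
  have hDjBj : ∀ z : M, Dj * (Bj * z) = z := fun z => by rw [← mul_assoc, hdbj, one_mul]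
  have hB1D1 : ∀ z : M, B1 * (D1 * z) = z := fun z => by rw [← mul_assoc, hbd1, one_mul]
  have hdd' : ∀ z : M, Dj * z = B1 * (Bi * z) := fun z => by rw [hdd, mul_assoc]
  have hBj : Bj = Di * D1 := by
    have h1 : Dj * (Di * D1) = 1 := by rw [hdd, mul_assoc, hBiDi, hbd1]
    calc Bj = Bj * (Dj * (Di * D1)) := by rw [h1, mul_one]
      _ = (Bj * Dj) * (Di * D1) := by rw [mul_assoc]
      _ = Di * D1 := by rw [hbdj, one_mul]
  have hBj' : ∀ z : M, Bj * z = Di * (D1 * z) := fun z => by rw [hBj, mul_assoc]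
  have hu' : ∀ z : M, B1 * (Di * (Xi * (Bi * z))) = Di * (Xi * (Bi * (B1 * z))) := by
    intro z
    have h := congrArg (· * z) hu
    simp only [mul_assoc] at h
    exact h.symm
  have hPP : ∀ z : M, Dj * (Di * (Dj * (Di * z))) = B1 * (B1 * z) := fun z => by
    rw [hdd', hBiDi, hdd', hBiDi]
  have htail : ∀ z : M, B1 * (B1 * (Bi * (Bj * (Bi * (Bj * (Di * z)))))) = Di * z := fun z => by
    rw [hBj', hBiDi, hBj', hBiDi, hB1D1, hB1D1]
  simp only [pow_two, mul_assoc]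
  rw [hDjBj, hDjBj, hPP, hu', hu', htail, hBiDi, hBiDi]

/-- (45). -/
theorem equiv_45 : ∀ i : ZMod 3,
    skCon (b (i-1)^2 * x i * d (i-1)^2)
      ((b (i-1)^2 * b i * d (i-1)^2) * (b (i-1) * d i * d (i-1)) *
        d i^2 * x i * b i^2 * (b (i-1) * b i * d (i-1)) *
        (b (i-1)^2 * d i * d (i-1)^2)) := by
  intro i
  refine skCon.eq.mp ?_
  have hbd : ∀ k : ZMod 3, (↑(b k) : skCon.Quotient) * ↑(d k) = 1 :=
    fun k => q_of (SKRel.r4bd k)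
  have hdb : ∀ k : ZMod 3, (↑(d k) : skCon.Quotient) * ↑(b k) = 1 :=
    fun k => q_of (SKRel.r4db k)
  have h3 : (↑(d 0) : skCon.Quotient) * ↑(d 1) * ↑(d 2) = 1 := q_of SKRel.r3
  have hu : (↑(d i) : skCon.Quotient) * ↑(x i) * ↑(b i) * ↑(b (i+1)) =
      ↑(b (i+1)) * (↑(d i) * ↑(x i) * ↑(b i)) :=
    q_of (SKRel.r10 i (b (i+1)) (by simp))
  -- cyclic rotations of relation (3)
  have cyc : ∀ p q y : skCon.Quotient, q * p = 1 → p * y = 1 → y * p = 1 := by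
    intro p q y h1 h2
    have hy : y = q := by
      calc y = 1 * y := (one_mul y).symm
        _ = q * p * y := by rw [h1]
        _ = q * (p * y) := by rw [mul_assoc]
        _ = q := by rw [h2, mul_one]
    rw [hy, h1]
  have r012 : (↑(d 0) : skCon.Quotient) * (↑(d 1) * ↑(d 2)) = 1 := by
    rw [← mul_assoc]; exact h3
  have r120 : (↑(d 1) : skCon.Quotient) * (↑(d 2) * ↑(d 0)) = 1 := by
    have := cyc (↑(d 0)) (↑(b 0)) (↑(d 1) * ↑(d 2)) (hbd 0) r012
    rw [mul_assoc] at this; exact this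
  have r201 : (↑(d 2) : skCon.Quotient) * (↑(d 0) * ↑(d 1)) = 1 := by
    have := cyc (↑(d 1)) (↑(b 1)) (↑(d 2) * ↑(d 0)) (hbd 1) r120
    rw [mul_assoc] at this; exact this
  have hrot : (↑(d (i+1)) : skCon.Quotient) * (↑(d (i-1)) * ↑(d i)) = 1 := by
    have hi : ∀ j : ZMod 3, j = 0 ∨ j = 1 ∨ j = 2 := by decide
    rcases hi i with h | h | h <;> subst h
    · rw [show ((0:ZMod 3)+1) = 1 by decide, show ((0:ZMod 3)-1) = 2 by decide]; exact r120
    · rw [show ((1:ZMod 3)+1) = 2 by decide, show ((1:ZMod 3)-1) = 0 by decide]; exact r201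
    · rw [show ((2:ZMod 3)+1) = 0 by decide, show ((2:ZMod 3)-1) = 1 by decide]; exact r012
  have hdd : (↑(d (i-1)) : skCon.Quotient) = ↑(b (i+1)) * ↑(b i) := by
    calc (↑(d (i-1)) : skCon.Quotient)
        = (↑(b (i+1)) * ↑(d (i+1))) * (↑(d (i-1)) * (↑(d i) * ↑(b i))) := by
          rw [hbd (i+1), one_mul, hdb i, mul_one]
      _ = ↑(b (i+1)) * ((↑(d (i+1)) * (↑(d (i-1)) * ↑(d i))) * ↑(b i)) := by
          simp only [mul_assoc]
      _ = ↑(b (i+1)) * (1 * ↑(b i)) := by rw [hrot]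
      _ = ↑(b (i+1)) * ↑(b i) := by rw [one_mul]
  have key := main_monoid (M := skCon.Quotient)
    (↑(b i)) (↑(d i)) (↑(b (i-1))) (↑(d (i-1))) (↑(b (i+1))) (↑(d (i+1))) (↑(x i))
    (hbd i) (hbd (i-1)) (hdb (i-1)) (hbd (i+1)) (hdb (i+1)) hdd hu
  simp only [pow_two, mul_assoc] at key
  simp only [pow_two, Con.coe_mul, mul_assoc]
  exact key
end
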